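/- If x is a vertex of G₂ with Z(x) = S, then the degree of x in G₂ equals ∏_{i ∈ S} (p_i − 1) · ( ∏_{j ∈ S^c} p_j − ∏_{j ∈ S^c} (p_j − 1) ), where S^c = {1,…,m} ∖ S. -/

import Mathlib

open Finset

abbrev NN (m : ℕ) (p : Fin m → ℕ) : ℕ := ∏ i, p i

abbrev Vtx (m : ℕ) (p : Fin m → ℕ) : Type :=
  {x : ZMod (NN m p) // x ≠ 0 ∧ ¬ IsUnit x}

/-- The induced subgraph `G₂` of the comaximal graph of `ℤ/nℤ` on nonzero nonunits. -/
def G2 (m : ℕ) (p : Fin m → ℕ) : SimpleGraph (Vtx m p) where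
  Adj x y := x ≠ y ∧ Ideal.span ({x.1, y.1} : Set (ZMod (NN m p))) = ⊤
  symm := by
    refine ⟨?_⟩
    rintro x y ⟨hxy, h⟩
    exact ⟨hxy.symm, by rwa [Set.pair_comm]⟩
  loopless := by refine ⟨?_⟩; rintro x ⟨h, -⟩; exact h rfl

/-- The zero-set of `x`: indices `i` where the image of `x` in `ℤ/p_iℤ` is zero. -/
def Z (m : ℕ) (p : Fin m → ℕ) (x : ZMod (NN m p)) : Finset (Fin m) :=
  Finset.univ.filter fun i =>
    (ZMod.castHom (Finset.dvd_prod_of_mem p (Finset.mem_univ i)) (ZMod (p i))) x = 0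

/-- The class `X_S` of vertices of `G₂` with zero-set `S`. -/
def XS (m : ℕ) (p : Fin m → ℕ) (S : Finset (Fin m)) : Set (Vtx m p) :=
  {x | Z m p x.1 = S}

/-! By the Chinese remainder theorem `ℤ/nℤ ≅ ∏ 𝔽_{p_i}`, and two elements generate the unit ideal
exactly when they are coprime, which in a product of fields means that they never vanish in the
same coordinate. A neighbour of `x` is therefore a nonunit `y` with `y_i ≠ 0` for all `i ∈ Z(x)`
(such a `y` is automatically nonzero and different from `x`). There are
`∏_{i ∈ S} (p_i - 1) · ∏_{j ∉ S} p_j` elements with `y_i ≠ 0` on `S`, and `∏_i (p_i - 1)` of them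
are units. -/

theorem Ideal.span_pair_eq_top_iff_isCoprime {R : Type*} [CommSemiring R] (x y : R) :
    Ideal.span {x, y} = ⊤ ↔ IsCoprime x y := by
  rw [Ideal.span_insert, Ideal.sup_eq_top_iff_isCoprime]

theorem Pi.isCoprime_iff {ι : Type*} {R : ι → Type*} [∀ i, CommSemiring (R i)]
    {f g : ∀ i, R i} : IsCoprime f g ↔ ∀ i, IsCoprime (f i) (g i) := by
  refine ⟨fun h i => h.map (Pi.evalRingHom R i), fun h => ?_⟩
  choose a b hab using h
  exact ⟨a, b, funext hab⟩

theorem RingEquiv.isCoprime_map_iff {R S : Type*} [CommSemiring R] [CommSemiring S]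
    (e : R ≃+* S) {x y : R} : IsCoprime (e x) (e y) ↔ IsCoprime x y :=
  ⟨fun h => by simpa using h.map e.symm.toRingHom, fun h => h.map e.toRingHom⟩

theorem Set.ncard_univ_pi {ι : Type*} [Fintype ι] {α : ι → Type*} (s : ∀ i, Set (α i)) :
    (Set.univ.pi s).ncard = ∏ i, (s i).ncard := by
  simp only [← Nat.card_coe_set_eq, Nat.card_congr (Equiv.Set.univPi s), Nat.card_pi]

theorem Set.ncard_setOf_ne_zero (K : Type*) [Zero K] [Finite K] :
    {a : K | a ≠ 0}.ncard = Nat.card K - 1 := by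
  rw [← Set.compl_singleton_eq, Set.ncard_compl, Set.ncard_singleton]

theorem ncard_nonunit_isCoprime_congr {R S : Type*} [CommSemiring R] [CommSemiring S]
    (e : R ≃+* S) (x : R) :
    {y | ¬IsUnit y ∧ IsCoprime x y}.ncard = {z | ¬IsUnit z ∧ IsCoprime (e x) z}.ncard := by
  rw [← Set.ncard_image_of_injective _ e.injective]
  congr 1
  ext z
  obtain ⟨y, rfl⟩ := e.surjective z
  simp [e.isCoprime_map_iff]

theorem ncard_nonunit_isCoprime_pi {ι : Type*} [Fintype ι] [DecidableEq ι] {K : ι → Type*}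
    [∀ i, Field (K i)] [∀ i, Finite (K i)] (x : ∀ i, K i) (S : Finset ι)
    (hS : ∀ i, i ∈ S ↔ x i = 0) :
    {f | ¬IsUnit f ∧ IsCoprime x f}.ncard =
      (∏ i ∈ S, (Nat.card (K i) - 1)) *
        ((∏ j ∈ Sᶜ, Nat.card (K j)) - ∏ j ∈ Sᶜ, (Nat.card (K j) - 1)) := by
  have hcoprime : {f | IsCoprime x f} = Set.univ.pi fun i => {a | x i ≠ 0 ∨ a ≠ 0} := by
    ext f; simp [Pi.isCoprime_iff]
  have hunit : {f : ∀ i, K i | IsUnit f} = Set.univ.pi fun i => {a | a ≠ 0} := by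
    ext f; simp [Pi.isUnit_iff]
  have hsub : {f : ∀ i, K i | IsUnit f} ⊆ {f | IsCoprime x f} := by
    rw [hunit, hcoprime]
    exact Set.pi_mono fun i _ a ha => Or.inr ha
  have hcard : ∀ i, {a : K i | x i ≠ 0 ∨ a ≠ 0}.ncard =
      if i ∈ S then Nat.card (K i) - 1 else Nat.card (K i) := by
    intro i
    split_ifs with hi
    · simp only [(hS i).1 hi, ne_eq, not_true_eq_false, false_or]
      exact Set.ncard_setOf_ne_zero (K i)
    · simp only [(hS i).not.1 hi, ne_eq, not_false_eq_true, true_or, Set.ofPred_true,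
        Set.ncard_univ]
  have hdiff : {f | ¬IsUnit f ∧ IsCoprime x f} = {f | IsCoprime x f} \ {f | IsUnit f} := by
    ext f; simp [and_comm]
  rw [hdiff, Set.ncard_sdiff hsub, hcoprime, hunit, Set.ncard_univ_pi, Set.ncard_univ_pi]
  simp only [hcard, Set.ncard_setOf_ne_zero]
  rw [← prod_mul_prod_compl S, ← prod_mul_prod_compl S (fun i => Nat.card (K i) - 1),
    prod_ite_of_true fun i hi => hi, prod_ite_of_false fun i hi => mem_compl.1 hi, Nat.mul_sub]

section G2

variable {m : ℕ} {p : Fin m → ℕ}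

theorem G2_adj_iff {x y : Vtx m p} : (G2 m p).Adj x y ↔ IsCoprime x.1 y.1 := by
  refine ⟨fun h => (Ideal.span_pair_eq_top_iff_isCoprime _ _).1 h.2,
    fun h => ⟨?_, (Ideal.span_pair_eq_top_iff_isCoprime _ _).2 h⟩⟩
  rintro rfl
  exact x.2.2 (isCoprime_self.1 h)

theorem G2_ncard_neighborSet (x : Vtx m p) :
    ((G2 m p).neighborSet x).ncard = {y | ¬IsUnit y ∧ IsCoprime x.1 y}.ncard := by
  rw [← Set.ncard_image_of_injective _ Subtype.val_injective]
  congr 1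
  ext y
  simp only [ne_eq, Set.mem_image, SimpleGraph.mem_neighborSet, G2_adj_iff, Subtype.exists,
    exists_and_left, exists_prop, exists_eq_right_right, Set.mem_ofPred_eq]
  refine ⟨fun ⟨h, _, hu⟩ => ⟨hu, h⟩, fun ⟨hu, h⟩ => ⟨h, ?_, hu⟩⟩
  rintro rfl
  exact x.2.2 (isCoprime_zero_right.1 h)

theorem mem_Z_iff (hco : Pairwise (Function.onFun Nat.Coprime p)) {y : ZMod (NN m p)}
    {i : Fin m} : i ∈ Z m p y ↔ ZMod.prodEquivPi p hco y i = 0 := by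
  simp only [Z, mem_filter, mem_univ, true_and, ZMod.prodEquivPi_apply]

end G2

theorem stmt5_general (m : ℕ) (p : Fin m → ℕ) (hp : ∀ i, (p i).Prime)
    (hmono : StrictMono p) (x : Vtx m p) (S : Finset (Fin m)) (hx : Z m p x.1 = S) :
    ((G2 m p).neighborSet x).ncard =
      (∏ i ∈ S, (p i - 1)) * ((∏ j ∈ Sᶜ, p j) - ∏ j ∈ Sᶜ, (p j - 1)) := by
  have hco : Pairwise (Function.onFun Nat.Coprime p) := fun i j hij =>
    (Nat.coprime_primes (hp i) (hp j)).2 (hmono.injective.ne hij)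
  have (i : Fin m) : Fact (p i).Prime := ⟨hp i⟩
  have hS (i : Fin m) : i ∈ S ↔ ZMod.prodEquivPi p hco x.1 i = 0 := by
    rw [← hx, mem_Z_iff hco]
  rw [G2_ncard_neighborSet, ncard_nonunit_isCoprime_congr (ZMod.prodEquivPi p hco),
    ncard_nonunit_isCoprime_pi _ S hS]
  simp only [Nat.card_zmod]

theorem stmt5 (m : ℕ) (hm : 2 ≤ m) (p : Fin m → ℕ) (hp : ∀ i, (p i).Prime)
    (hmono : StrictMono p) (x : Vtx m p) (S : Finset (Fin m)) (hx : Z m p x.1 = S) :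
    ((G2 m p).neighborSet x).ncard =
      (∏ i ∈ S, (p i - 1)) * ((∏ j ∈ Sᶜ, p j) - ∏ j ∈ Sᶜ, (p j - 1)) :=
  stmt5_general m p hp hmono x S hx
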